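/- In the d-dimensional torus T_L^d with L even, every non-empty (r,b)-robust set (for two-way r-bootstrap percolation, 2 ≤ r ≤ d) intersects at least 2^{r-1} pairwise disjoint (r,w)-robust sets. -/

import Mathlib

open scoped Classical ENNReal
open MeasureTheory Filter

/-- Vertices of the `d`-dimensional torus with side length `L`. -/
abbrev TorusV (d L : ℕ) := Fin d → ZMod L

/-- The `d`-dimensional torus graph `T_L^d`: two nodes are adjacent iff they differ
by `±1 (mod L)` in exactly one coordinate. -/
def torusGraph (d L : ℕ) : SimpleGraph (TorusV d L) where
  Adj v u := v ≠ u ∧ ∃ j, (u j = v j + 1 ∨ u j = v j - 1) ∧ ∀ k, k ≠ j → u k = v k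
  symm := by
    constructor
    rintro v u ⟨hne, j, hj, hk⟩
    refine ⟨hne.symm, j, ?_, fun k hkj => (hk k hkj).symm⟩
    rcases hj with h | h
    · right; rw [h]; ring
    · left; rw [h]; ring
  loopless := by constructor; rintro v ⟨hne, -⟩; exact hne rfl

/-- One round of two-way `r`-bootstrap percolation on a finite graph:
a node is black in the next round iff it has at least `r` black neighbors. -/
noncomputable def gStep {V : Type*} [Fintype V] (G : SimpleGraph V) (r : ℕ)
    (C : V → Bool) : V → Bool :=
  fun v => decide (r ≤ (Finset.univ.filter (fun u => G.Adj v u ∧ C u = true)).card)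

/-- One round of (ordinary) `r`-bootstrap percolation: black nodes stay black, and a white
node becomes black iff it has at least `r` black neighbors. -/
noncomputable def bpStep {V : Type*} [Fintype V] (G : SimpleGraph V) (r : ℕ)
    (C : V → Bool) : V → Bool :=
  fun v => C v || decide (r ≤ (Finset.univ.filter (fun u => G.Adj v u ∧ C u = true)).card)

/-- One round of the majority model: each node adopts the most frequent color among its
neighbors, keeping its own color in case of a tie. -/
noncomputable def majStep {V : Type*} [Fintype V] (G : SimpleGraph V)
    (C : V → Bool) : V → Bool :=
  fun v =>
    let b := (Finset.univ.filter (fun u => G.Adj v u ∧ C u = true)).card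
    let w := (Finset.univ.filter (fun u => G.Adj v u ∧ C u = false)).card
    if w < b then true else if b < w then false else C v

/-- `S` is an `(r,c)`-robust set in two-way `r`-BP: whenever all nodes of `S` have color `c`,
they keep color `c` in all subsequent configurations. (`true` = black, `false` = white.) -/
noncomputable def isRobust {V : Type*} [Fintype V] (G : SimpleGraph V) (r : ℕ) (c : Bool)
    (S : Finset V) : Prop :=
  ∀ C : V → Bool, (∀ v ∈ S, C v = c) → ∀ t, ∀ v ∈ S, (gStep G r)^[t] C v = c

/-- `S` is a b-eternal set in two-way `r`-BP: whenever all nodes of `S` are black, every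
subsequent configuration contains at least one black node. -/
noncomputable def isBEternal {V : Type*} [Fintype V] (G : SimpleGraph V) (r : ℕ)
    (S : Finset V) : Prop :=
  ∀ C : V → Bool, (∀ v ∈ S, C v = true) → ∀ t, ∃ v, (gStep G r)^[t] C v = true

/-- The node of a hyper-square at start `i` obtained by incrementing the coordinates in `S`. -/
def hsNode {d L : ℕ} (i : TorusV d L) (S : Finset (Fin d)) : TorusV d L :=
  fun j => if j ∈ S then i j + 1 else i j

/-- The hyper-square with starting node `i` and coordinate set `J` (an `J.card`-dimensional
hyper-square). -/
noncomputable def hyperSquare {d L : ℕ} (i : TorusV d L) (J : Finset (Fin d)) :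
    Finset (TorusV d L) :=
  J.powerset.image (hsNode i)

/-- The even-part of the hyper-square: nodes differing from the start in an even number of
coordinates. -/
noncomputable def evenPart {d L : ℕ} (i : TorusV d L) (J : Finset (Fin d)) :
    Finset (TorusV d L) :=
  (J.powerset.filter (fun S => Even S.card)).image (hsNode i)

/-- The odd-part of the hyper-square: nodes differing from the start in an odd number of
coordinates. -/
noncomputable def oddPart {d L : ℕ} (i : TorusV d L) (J : Finset (Fin d)) :
    Finset (TorusV d L) :=
  (J.powerset.filter (fun S => Odd S.card)).image (hsNode i)

/-- The hyper-rectangle of size `l 0 × ⋯ × l (d-1)` starting at node `i`. -/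
noncomputable def hyperRect {d L : ℕ} [NeZero L] (i : TorusV d L) (l : Fin d → ℕ) :
    Finset (TorusV d L) :=
  Finset.univ.filter (fun v => ∀ j, ∃ m : ℕ, m ≤ l j ∧ v j = i j + (m : ZMod L))

/-- The parity of a hyper-square of the tiling: parity of the sum of the last `d - r`
coordinates of its starting node. -/
def tpar (d L r : ℕ) (i : TorusV d L) : ℕ :=
  (∑ j ∈ Finset.univ.filter (fun j : Fin d => r ≤ (j : ℕ)), (i j).val) % 2

/-- A hyper-square of the tiling (start `i`, coordinate set = first `r` coordinates) is
occupied: its even-part is fully black if its parity is even, and its odd-part is fully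
black if its parity is odd. -/
noncomputable def occupiedHS (d L r : ℕ) (i : TorusV d L) (C : TorusV d L → Bool) : Prop :=
  if tpar d L r i = 0 then
    ∀ v ∈ evenPart i (Finset.univ.filter (fun j : Fin d => (j : ℕ) < r)), C v = true
  else
    ∀ v ∈ oddPart i (Finset.univ.filter (fun j : Fin d => (j : ℕ) < r)), C v = true

/-- The Bernoulli measure on `Bool` with success (black) probability `p` (clamped to `1`). -/
noncomputable def bernoulliMeasure (p : ℝ≥0∞) : Measure Bool :=
  (PMF.bernoulli (min p 1).toNNReal
    (by simpa using ENNReal.toNNReal_mono ENNReal.one_ne_top (min_le_right p 1))).toMeasure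

/-- The product measure on configurations: each node is independently black with
probability `p`. -/
noncomputable def productMeasure (V : Type*) [Fintype V] (p : ℝ≥0∞) :
    Measure (V → Bool) :=
  Measure.pi (fun _ : V => bernoulliMeasure p)

/-!
Every edge of the torus, say from `u` to `u + e_j`, is separated by a matching cut: a slab of
two consecutive layers in direction `j` containing `u` but not `u + e_j`. Since `L ≥ 4`, each
vertex has at most one neighbour across such a slab. Cutting a region along a slab that separates
an edge inside `S` gives two halves that both meet `S`; within its half, a vertex of `S` loses at
most one neighbour in `S`, and any vertex gains at most one neighbour outside. Every vertex of a
`(r,b)`-robust `S` has at least `r` neighbours in `S`, so starting from the whole torus we can cut `r - 1`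
times, getting `2 ^ (r - 1)` disjoint regions meeting `S` in which every vertex has at most
`r - 1` neighbours outside; such regions are `(r,w)`-robust.
-/

open Finset

lemma Finset.card_union_of_forall_disjoint {α : Type*} [DecidableEq α]
    {𝒲₀ 𝒲₁ : Finset (Finset α)} (hne : ∀ W ∈ 𝒲₀, W.Nonempty)
    (h : ∀ W₀ ∈ 𝒲₀, ∀ W₁ ∈ 𝒲₁, Disjoint W₀ W₁) : #(𝒲₀ ∪ 𝒲₁) = #𝒲₀ + #𝒲₁ :=
  card_union_of_disjoint <| Finset.disjoint_left.2 fun W h₀ h₁ =>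
    (hne W h₀).ne_empty (disjoint_self.1 (h W h₀ W h₁))

namespace SimpleGraph

variable {V : Type*} [Fintype V] [DecidableEq V] {G : SimpleGraph V}

variable (G) in
def IsMatchingCut (Q : Finset V) : Prop :=
  ∀ ⦃x y z⦄, G.Adj x y → G.Adj x z → (y ∈ Q ↔ x ∉ Q) → (z ∈ Q ↔ x ∉ Q) → y = z

namespace IsMatchingCut

variable {Q : Finset V} {x : V}

lemma compl (hQ : G.IsMatchingCut Q) : G.IsMatchingCut Qᶜ := by
  intro x y z hy hz hyQ hzQ
  simp only [Finset.mem_compl, not_not] at hyQ hzQ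
  exact hQ hy hz (by tauto) (by tauto)

lemma card_neighborFinset_sdiff_le_one (hQ : G.IsMatchingCut Q) (hx : x ∈ Q) :
    #(G.neighborFinset x \ Q) ≤ 1 :=
  card_le_one.2 fun y hy z hz => by
    simp only [Finset.mem_sdiff, mem_neighborFinset] at hy hz
    exact hQ hy.1 hz.1 (iff_of_false hy.2 (not_not.2 hx)) (iff_of_false hz.2 (not_not.2 hx))

lemma card_neighborFinset_sdiff_inter_le (hQ : G.IsMatchingCut Q) (hx : x ∈ Q) (B : Finset V) :
    #(G.neighborFinset x \ (B ∩ Q)) ≤ #(G.neighborFinset x \ B) + 1 := by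
  rw [sdiff_inter_distrib_right]
  exact (card_union_le _ _).trans (Nat.add_le_add_left (hQ.card_neighborFinset_sdiff_le_one hx) _)

lemma card_neighborFinset_inter_le (hQ : G.IsMatchingCut Q) (hx : x ∈ Q) (S : Finset V) :
    #(G.neighborFinset x ∩ S) ≤ #(G.neighborFinset x ∩ (S ∩ Q)) + 1 := by
  calc #(G.neighborFinset x ∩ S)
      ≤ #(G.neighborFinset x ∩ (S ∩ Q) ∪ G.neighborFinset x \ Q) := card_le_card <| by
        intro y hy
        rw [Finset.mem_inter] at hy
        by_cases hyQ : y ∈ Q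
        · exact mem_union_left _ (Finset.mem_inter.2 ⟨hy.1, Finset.mem_inter.2 ⟨hy.2, hyQ⟩⟩)
        · exact mem_union_right _ (Finset.mem_sdiff.2 ⟨hy.1, hyQ⟩)
    _ ≤ _ := (card_union_le _ _).trans
        (Nat.add_le_add_left (hQ.card_neighborFinset_sdiff_le_one hx) _)

end IsMatchingCut

variable (G) in
def EdgesSeparatedByMatchingCuts : Prop :=
  ∀ ⦃u v⦄, G.Adj u v → ∃ Q, G.IsMatchingCut Q ∧ u ∈ Q ∧ v ∉ Q

theorem EdgesSeparatedByMatchingCuts.exists_pairwiseDisjoint (hG : G.EdgesSeparatedByMatchingCuts)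
    (m : ℕ) {B S : Finset V} (hS : S.Nonempty) (hSB : S ⊆ B)
    (hdeg : ∀ v ∈ S, m ≤ #(G.neighborFinset v ∩ S)) :
    ∃ 𝒲 : Finset (Finset V), #𝒲 = 2 ^ m ∧ (𝒲 : Set (Finset V)).PairwiseDisjoint id ∧
      ∀ W ∈ 𝒲, W ⊆ B ∧ (W ∩ S).Nonempty ∧
        ∀ v ∈ W, #(G.neighborFinset v \ W) ≤ #(G.neighborFinset v \ B) + m := by
  induction m generalizing B S with
  | zero =>
    refine ⟨{B}, rfl, by simp, fun W hW => ?_⟩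
    rw [mem_singleton] at hW
    subst hW
    exact ⟨subset_rfl, by rwa [inter_eq_right.2 hSB], fun v _ => le_rfl⟩
  | succ m ih =>
    -- Each side of a matching cut costs every vertex at most one neighbour.
    have half : ∀ Q, G.IsMatchingCut Q → (S ∩ Q).Nonempty →
        ∃ 𝒲 : Finset (Finset V), #𝒲 = 2 ^ m ∧ (𝒲 : Set (Finset V)).PairwiseDisjoint id ∧
          ∀ W ∈ 𝒲, W ⊆ B ∩ Q ∧ (W ∩ S).Nonempty ∧
            ∀ v ∈ W, #(G.neighborFinset v \ W) ≤ #(G.neighborFinset v \ B) + (m + 1) := by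
      intro Q hQ hSQ
      obtain ⟨𝒲, hcard, hdisj, h𝒲⟩ := ih hSQ (inter_subset_inter_right hSB) fun v hv => by
        have := hQ.card_neighborFinset_inter_le (Finset.mem_inter.1 hv).2 S
        have := hdeg v (Finset.mem_inter.1 hv).1
        omega
      refine ⟨𝒲, hcard, hdisj, fun W hW => ?_⟩
      obtain ⟨hWB, ⟨x, hx⟩, hWdeg⟩ := h𝒲 W hW
      refine ⟨hWB, ⟨x, inter_subset_inter_left inter_subset_left hx⟩, fun v hv => ?_⟩
      have := hQ.card_neighborFinset_sdiff_inter_le (Finset.mem_inter.1 (hWB hv)).2 B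
      have := hWdeg v hv
      omega
    obtain ⟨v, hv⟩ := hS
    obtain ⟨u, hu⟩ : (G.neighborFinset v ∩ S).Nonempty :=
      card_pos.1 (Nat.lt_of_lt_of_le m.succ_pos (hdeg v hv))
    rw [Finset.mem_inter, mem_neighborFinset] at hu
    obtain ⟨Q, hQ, hvQ, huQ⟩ := hG hu.1
    obtain ⟨𝒲₀, hcard₀, hdisj₀, h𝒲₀⟩ := half Q hQ ⟨v, Finset.mem_inter.2 ⟨hv, hvQ⟩⟩
    obtain ⟨𝒲₁, hcard₁, hdisj₁, h𝒲₁⟩ :=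
      half Qᶜ hQ.compl ⟨u, Finset.mem_inter.2 ⟨hu.2, Finset.mem_compl.2 huQ⟩⟩
    have hsides : ∀ W₀ ∈ 𝒲₀, ∀ W₁ ∈ 𝒲₁, Disjoint W₀ W₁ := fun W₀ h₀ W₁ h₁ =>
      (disjoint_compl_right.mono inter_subset_right inter_subset_right).mono
        (h𝒲₀ W₀ h₀).1 (h𝒲₁ W₁ h₁).1
    refine ⟨𝒲₀ ∪ 𝒲₁, ?_, ?_, ?_⟩
    · rw [card_union_of_forall_disjoint (fun W hW => (h𝒲₀ W hW).2.1.mono inter_subset_left) hsides,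
        hcard₀, hcard₁, pow_succ, mul_two]
    · rw [coe_union, Set.pairwiseDisjoint_union]
      exact ⟨hdisj₀, hdisj₁, fun W₀ h₀ W₁ h₁ _ => hsides W₀ h₀ W₁ h₁⟩
    · intro W hW
      rcases Finset.mem_union.1 hW with h | h
      · obtain ⟨hWB, hWS, hWdeg⟩ := h𝒲₀ W h
        exact ⟨hWB.trans inter_subset_left, hWS, hWdeg⟩
      · obtain ⟨hWB, hWS, hWdeg⟩ := h𝒲₁ W h
        exact ⟨hWB.trans inter_subset_left, hWS, hWdeg⟩

end SimpleGraph

def torusSlab {d L : ℕ} [NeZero L] (j : Fin d) (c : ZMod L) : Finset (TorusV d L) :=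
  univ.filter fun x => x j = c ∨ x j = c + 1

lemma ZMod.natCast_ne_zero_of_lt {L n : ℕ} (h0 : 0 < n) (hn : n < L) : (n : ZMod L) ≠ 0 := by
  rw [Ne, ZMod.natCast_eq_zero_iff]
  exact fun h => absurd (Nat.le_of_dvd h0 h) (by omega)

lemma isMatchingCut_torusSlab {d L : ℕ} [NeZero L] (hL : 4 ≤ L) (j : Fin d) (c : ZMod L) :
    (torusGraph d L).IsMatchingCut (torusSlab j c) := by
  have h2 : ((2 : ℕ) : ZMod L) ≠ 0 := ZMod.natCast_ne_zero_of_lt two_pos (by omega)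
  have h3 : ((3 : ℕ) : ZMod L) ≠ 0 := ZMod.natCast_ne_zero_of_lt three_pos (by omega)
  push_cast at h2 h3
  rintro x y z ⟨-, k, hyk, hy⟩ ⟨-, k', hzk, hz⟩ hyQ hzQ
  simp only [torusSlab, mem_filter, mem_univ, true_and] at hyQ hzQ
  have hk : k = j := by
    by_contra h
    rw [hy j (Ne.symm h)] at hyQ
    tauto
  have hk' : k' = j := by
    by_contra h
    rw [hz j (Ne.symm h)] at hzQ
    tauto
  subst k k'
  -- Both neighbours `x ± e_j` crossing the slab would force `2 = 0` or `3 = 0` in `ZMod L`.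
  have hyz : y j = z j := by grind
  funext i
  by_cases hi : i = j
  · rw [hi, hyz]
  · rw [hy i hi, hz i hi]

lemma edgesSeparatedByMatchingCuts_torusGraph {d L : ℕ} [NeZero L] (hL : 4 ≤ L) :
    (torusGraph d L).EdgesSeparatedByMatchingCuts := by
  have h1 : ((1 : ℕ) : ZMod L) ≠ 0 := ZMod.natCast_ne_zero_of_lt one_pos (by omega)
  have h2 : ((2 : ℕ) : ZMod L) ≠ 0 := ZMod.natCast_ne_zero_of_lt two_pos (by omega)
  push_cast at h1 h2
  rintro u v ⟨-, j, hvj, -⟩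
  rcases hvj with hvj | hvj
  · refine ⟨torusSlab j (u j - 1), isMatchingCut_torusSlab hL j _, ?_, ?_⟩ <;>
      simp only [torusSlab, mem_filter, mem_univ, true_and]
    · exact Or.inr (sub_add_cancel _ _).symm
    · rintro (h | h)
      · exact h2 (by linear_combination h - hvj)
      · exact h1 (by linear_combination h - hvj)
  · refine ⟨torusSlab j (u j), isMatchingCut_torusSlab hL j _, by simp [torusSlab], ?_⟩
    simp only [torusSlab, mem_filter, mem_univ, true_and]
    rintro (h | h)
    · exact h1 (by linear_combination hvj - h)
    · exact h2 (by linear_combination hvj - h)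

lemma le_card_neighborFinset_inter_of_isRobust {V : Type*} [Fintype V] [DecidableEq V]
    {G : SimpleGraph V} {r : ℕ} {S : Finset V} (hS : isRobust G r true S) {v : V} (hv : v ∈ S) :
    r ≤ #(G.neighborFinset v ∩ S) := by
  have h := hS (fun u => decide (u ∈ S)) (fun u hu => by simp [hu]) 1 v hv
  simp only [Function.iterate_one, gStep, decide_eq_true_eq] at h
  convert h using 2
  ext u
  simp

lemma isRobust_false_of_card_neighborFinset_sdiff_lt {V : Type*} [Fintype V] [DecidableEq V]
    {G : SimpleGraph V} {r : ℕ} {W : Finset V}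
    (hW : ∀ v ∈ W, #(G.neighborFinset v \ W) < r) : isRobust G r false W := by
  intro C hC t
  induction t with
  | zero => simpa using hC
  | succ t ih =>
    intro v hv
    rw [Function.iterate_succ_apply', gStep, decide_eq_false_iff_not, not_le]
    refine lt_of_le_of_lt (card_le_card fun u hu => ?_) (hW v hv)
    simp only [mem_filter, mem_univ, true_and] at hu
    refine Finset.mem_sdiff.2 ⟨(G.mem_neighborFinset v u).2 hu.1, fun huW => ?_⟩
    simp [ih u huW] at hu

theorem stmt_4_general (d L r : ℕ) [NeZero L] (hL : 4 ≤ L) (hr : 2 ≤ r)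
    (S : Finset (TorusV d L)) (hS : S.Nonempty)
    (hrob : isRobust (torusGraph d L) r true S) :
    ∃ W : Fin (2 ^ (r - 1)) → Finset (TorusV d L),
      (∀ a, isRobust (torusGraph d L) r false (W a)) ∧
      (∀ a b, a ≠ b → Disjoint (W a) (W b)) ∧
      (∀ a, (W a ∩ S).Nonempty) := by
  obtain ⟨𝒲, hcard, hdisj, h𝒲⟩ :=
    SimpleGraph.EdgesSeparatedByMatchingCuts.exists_pairwiseDisjoint
      (edgesSeparatedByMatchingCuts_torusGraph hL) (r - 1) hS (subset_univ S) fun v hv =>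
        (Nat.sub_le r 1).trans (le_card_neighborFinset_inter_of_isRobust hrob hv)
  let e := 𝒲.equivFinOfCardEq hcard
  refine ⟨fun a => e.symm a, fun a => ?_, fun a b hab => ?_, fun a => (h𝒲 _ (e.symm a).2).2.1⟩
  · refine isRobust_false_of_card_neighborFinset_sdiff_lt fun v hv => ?_
    dsimp only at hv ⊢
    have := (h𝒲 _ (e.symm a).2).2.2 v hv
    rw [sdiff_eq_empty_iff_subset.2 (subset_univ _), card_empty] at this
    omega
  · exact hdisj (e.symm a).2 (e.symm b).2 fun h => hab (e.symm.injective (Subtype.ext h))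

theorem stmt_4 (d L r : ℕ) [NeZero L] (hL : 4 ≤ L) (hLe : Even L) (hr : 2 ≤ r) (hrd : r ≤ d)
    (S : Finset (TorusV d L)) (hS : S.Nonempty)
    (hrob : isRobust (torusGraph d L) r true S) :
    ∃ W : Fin (2 ^ (r - 1)) → Finset (TorusV d L),
      (∀ a, isRobust (torusGraph d L) r false (W a)) ∧
      (∀ a b, a ≠ b → Disjoint (W a) (W b)) ∧
      (∀ a, (W a ∩ S).Nonempty) :=
  stmt_4_general d L r hL hr S hS hrob
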